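/- arXiv:0812.2687 — 4 statements merged into one kernel-verified Lean document; each statement's English description precedes it below -/
import Mathlib

section
/- Let g be the formal power series over ℚ with g = X + X³ + 2X⁵ + 4X⁷ + 5X⁹ + 6X¹¹ + 7X¹³ + (higher order terms), i.e. coefficients c₀=0, c₁=1, c₂=0, c₃=1, c₄=0, c₅=2, c₆=0, c₇=4, c₈=0, c₉=5, c₁₀=0, c₁₁=6 (higher coefficients arbitrary). Then there exists a unique formal power series t over ℚ with constant coefficient 0 and coefficient of X equal to 1 such that g(t(X)) ≡ X modulo X¹², and this t satisfies: coefficient of X³ in t is −1, coefficient of X⁵ is 1, coefficients of X²ᵏ are 0 for 1 ≤ k ≤ 5, coefficients of X⁷ and X⁹ are 0, and the coefficient of X¹¹ in t is −19. -/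
/-
The inverse is computed modulo `X¹²`: `τ = X - X³ + X⁵ - 19X¹¹` satisfies
`τ + τ³ + 2τ⁵ + 4τ⁷ + 5τ⁹ + 6τ¹¹ ≡ X`, and the degree-`n` coefficient of `g ∘ t` only sees the
first `n + 1` coefficients of `g`. Uniqueness is triangularity: if `t ≡ t'` modulo `Xⁿ` and both
have zero constant term, then `tᵏ ≡ t'ᵏ` modulo `Xⁿ⁺¹` for `k ≥ 2`, so the degree-`n` coefficients
of `g ∘ t` and `g ∘ t'` differ by `g₁ (tₙ - t'ₙ)`.
-/

open PowerSeries

/-- Composition `g ∘ h` of formal power series (intended for `h` with zero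
constant coefficient): the `n`-th coefficient is the `n`-th coefficient of the
evaluation at `h` of the truncation of `g` in degrees `≤ n`. -/
noncomputable def PowerSeries.compose (g h : PowerSeries ℚ) : PowerSeries ℚ :=
  PowerSeries.mk fun n =>
    PowerSeries.coeff n (Polynomial.aeval h (PowerSeries.trunc (n + 1) g))

theorem mul_dvd_pow_sub_pow {R : Type*} [CommRing R] {x y a b : R} (ha : x ∣ a) (hb : x ∣ b)
    (hab : y ∣ a - b) {k : ℕ} (hk : 2 ≤ k) : y * x ∣ a ^ k - b ^ k := by
  rw [← geom_sum₂_mul, mul_comm y]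
  refine mul_dvd_mul (Finset.dvd_sum fun i _ => ?_) hab
  rcases Nat.eq_zero_or_pos i with rfl | hi0
  · exact dvd_mul_of_dvd_right (hb.pow (by omega)) _
  · exact dvd_mul_of_dvd_left (ha.pow hi0.ne') _

namespace PowerSeries

theorem coeff_X_pow_mul_of_lt {R : Type*} [Semiring R] (p : R⟦X⟧) {n k : ℕ} (h : n < k) :
    coeff n (X ^ k * p) = 0 :=
  X_pow_dvd_iff.mp (dvd_mul_right _ _) n h

theorem coeff_compose (g h : ℚ⟦X⟧) (n : ℕ) :
    coeff n (compose g h) = ∑ i ∈ Finset.range (n + 1), coeff i g * coeff n (h ^ i) := by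
  rw [compose, coeff_mk, Polynomial.aeval_eq_sum_range' (natDegree_trunc_lt g n) h, map_sum]
  refine Finset.sum_congr rfl fun i hi => ?_
  rw [map_smul, smul_eq_mul, coeff_trunc, if_pos (Finset.mem_range.mp hi)]

theorem coeff_compose_of_lt (g : ℚ⟦X⟧) {h : ℚ⟦X⟧} (hh : constantCoeff h = 0) {n N : ℕ}
    (hn : n < N) :
    coeff n (compose g h) = coeff n (∑ i ∈ Finset.range N, C (coeff i g) * h ^ i) := by
  simp only [coeff_compose, map_sum, coeff_C_mul]
  refine Finset.sum_subset (Finset.range_subset_range.mpr hn) fun i _ hi => ?_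
  have hni : n < i := by simpa using hi
  rw [X_pow_dvd_iff.mp (pow_dvd_pow_of_dvd (X_dvd_iff.mpr hh) i) n hni, mul_zero]

theorem coeff_compose_sub_coeff_compose (g : ℚ⟦X⟧) {a b : ℚ⟦X⟧} (ha : constantCoeff a = 0)
    (hb : constantCoeff b = 0) {n : ℕ} (hab : X ^ n ∣ a - b) :
    coeff n (compose g a) - coeff n (compose g b) = coeff 1 g * (coeff n a - coeff n b) := by
  simp only [coeff_compose, ← Finset.sum_sub_distrib, ← mul_sub, ← map_sub]
  rw [Finset.sum_eq_single 1, pow_one, pow_one]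
  · intro i _ hi1
    rcases Nat.lt_or_ge i 2 with hi | hi
    · obtain rfl : i = 0 := by omega
      simp
    · have hdvd := mul_dvd_pow_sub_pow (X_dvd_iff.mpr ha) (X_dvd_iff.mpr hb) hab hi
      rw [← pow_succ] at hdvd
      rw [X_pow_dvd_iff.mp hdvd n n.lt_succ_self, mul_zero]
  · intro h1
    obtain rfl : n = 0 := by simpa using h1
    simp [ha, hb]

theorem X_pow_dvd_sub_of_coeff_compose_eq {g a b : ℚ⟦X⟧} (hg : coeff 1 g ≠ 0)
    (ha : constantCoeff a = 0) (hb : constantCoeff b = 0) {N : ℕ}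
    (h : ∀ n < N, coeff n (compose g a) = coeff n (compose g b)) : X ^ N ∣ a - b := by
  induction N with
  | zero => simp
  | succ n ih =>
    have hn : X ^ n ∣ a - b := ih fun m hm => h m (by omega)
    have hcoeff : coeff n (a - b) = 0 := by
      have key := coeff_compose_sub_coeff_compose g ha hb hn
      rw [h n n.lt_succ_self, sub_self, eq_comm, mul_eq_zero] at key
      simpa using key.resolve_left hg
    refine X_pow_dvd_iff.mpr fun m hm => ?_
    rcases Nat.lt_succ_iff_lt_or_eq.mp hm with hm | rfl
    · exact X_pow_dvd_iff.mp hn m hm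
    · exact hcoeff

end PowerSeries

noncomputable def truncatedInverse : ℚ⟦X⟧ := X - X ^ 3 + X ^ 5 - C 19 * X ^ 11

theorem X_pow_twelve_dvd_eval_truncatedInverse :
    (X : ℚ⟦X⟧) ^ 12 ∣ truncatedInverse + truncatedInverse ^ 3 + 2 * truncatedInverse ^ 5 +
      4 * truncatedInverse ^ 7 + 5 * truncatedInverse ^ 9 + 6 * truncatedInverse ^ 11 - X := by
  refine X_pow_dvd_iff.mpr fun n hn => ?_
  rw [truncatedInverse, map_ofNat]
  -- after expansion every monomial left has degree at least 12
  ring_nf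
  simp (disch := omega) only [map_add, map_sub, map_neg, coeff_X_pow_mul_of_lt, add_zero,
    neg_zero, sub_self]

theorem stmt0 (g : PowerSeries ℚ)
    (h0 : coeff 0 g = 0) (h1 : coeff 1 g = 1) (h2 : coeff 2 g = 0)
    (h3 : coeff 3 g = 1) (h4 : coeff 4 g = 0) (h5 : coeff 5 g = 2)
    (h6 : coeff 6 g = 0) (h7 : coeff 7 g = 4) (h8 : coeff 8 g = 0)
    (h9 : coeff 9 g = 5) (h10 : coeff 10 g = 0) (h11 : coeff 11 g = 6) :
    ∃ t : PowerSeries ℚ,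
      (constantCoeff t = 0 ∧ coeff 1 t = 1 ∧
        ∀ n < 12, coeff n (PowerSeries.compose g t) = coeff n (X : PowerSeries ℚ)) ∧
      (coeff 3 t = -1 ∧ coeff 5 t = 1 ∧
        (∀ k, 1 ≤ k → k ≤ 5 → coeff (2 * k) t = 0) ∧
        coeff 7 t = 0 ∧ coeff 9 t = 0 ∧ coeff 11 t = -19) ∧
      (∀ t' : PowerSeries ℚ,
        (constantCoeff t' = 0 ∧ coeff 1 t' = 1 ∧
          ∀ n < 12, coeff n (PowerSeries.compose g t') = coeff n (X : PowerSeries ℚ)) →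
        ∀ n < 12, coeff n t' = coeff n t) := by
  have hτ : constantCoeff truncatedInverse = 0 := by
    simp [truncatedInverse]
  have hcomp : ∀ n < 12, coeff n (compose g truncatedInverse) = coeff n X := by
    intro n hn
    rw [coeff_compose_of_lt g hτ hn, ← sub_eq_zero, ← map_sub]
    simp only [Finset.sum_range_succ, Finset.sum_range_zero, h0, h1, h2, h3, h4, h5, h6, h7, h8,
      h9, h10, h11, map_zero, map_one, map_ofNat, zero_mul, one_mul, zero_add, add_zero, pow_one]
    exact X_pow_dvd_iff.mp X_pow_twelve_dvd_eval_truncatedInverse n hn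
  have heven : ∀ k, 1 ≤ k → k ≤ 5 → coeff (2 * k) truncatedInverse = 0 := by
    intro k hk1 hk5
    interval_cases k <;> simp [truncatedInverse, coeff_X_pow, coeff_X]
  have huniq : ∀ t' : ℚ⟦X⟧, (constantCoeff t' = 0 ∧ coeff 1 t' = 1 ∧
      ∀ n < 12, coeff n (compose g t') = coeff n X) →
      ∀ n < 12, coeff n t' = coeff n truncatedInverse := by
    rintro t' ⟨ht', -, hcomp'⟩ n hn
    have hdvd := X_pow_dvd_sub_of_coeff_compose_eq (by simp [h1]) ht' hτ
      fun m hm => (hcomp' m hm).trans (hcomp m hm).symm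
    simpa [sub_eq_zero] using X_pow_dvd_iff.mp hdvd n hn
  refine ⟨truncatedInverse, ⟨hτ, ?_, hcomp⟩, ⟨?_, ?_, heven, ?_, ?_, ?_⟩, huniq⟩ <;>
    simp [truncatedInverse, coeff_X_pow, coeff_X]
end

section
/- Let g be a formal power series over ℚ whose coefficients satisfy: coefficient of X is 1, coefficient of X³ is 1, coefficient of X⁵ is 2, coefficient of X⁷ is 4, coefficient of X⁹ is 5, coefficient of X¹¹ is 6, and all even-degree coefficients and the constant coefficient are 0. Then there is no formal power series s over ℚ with all coefficients nonnegative such that g(−s(−X)) = X (composition of formal power series, where s has zero constant term). -/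
open PowerSeries

/-!
Write `f = -s(-X)`. Since the coefficient of `X` in `g` is `1`, the degree-`n` coefficient of
`g ∘ f` is `f_n` plus a polynomial in `f_1, …, f_(n-1)`, so `g ∘ f = X` determines `f` degree by
degree. The polynomial `X - X³ + X⁵` satisfies `g ∘ (X - X³ + X⁵) ≡ X + 19 X¹¹ mod X¹²`, hence `f`
agrees with it below degree `11` and `f₁₁ = -19`. But `f₁₁ = s₁₁ ≥ 0`.
-/

namespace PowerSeries

variable {R : Type*} [CommRing R]

theorem coeff_pow_eq_of_coeff_eq {f q : R⟦X⟧} {n i : ℕ} (hi : 2 ≤ i)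
    (hf : constantCoeff f = 0) (hq : constantCoeff q = 0)
    (hfq : ∀ k < n, coeff k f = coeff k q) :
    coeff n (f ^ i) = coeff n (q ^ i) := by
  have hsub : X ^ n ∣ f - q :=
    X_pow_dvd_iff.mpr fun k hk => by rw [map_sub, hfq k hk, sub_self]
  have hgeom : X ∣ ∑ j ∈ Finset.range i, f ^ j * q ^ (i - 1 - j) := by
    refine Finset.dvd_sum fun j _ => ?_
    rcases Nat.eq_zero_or_pos j with rfl | hj
    · exact (dvd_pow (X_dvd_iff.mpr hq) (by omega)).mul_left _
    · exact (dvd_pow (X_dvd_iff.mpr hf) hj.ne').mul_right _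
  have hdvd : X ^ (n + 1) ∣ f ^ i - q ^ i := by
    rw [← geom_sum₂_mul, pow_succ']
    exact mul_dvd_mul hgeom hsub
  rw [← sub_eq_zero, ← map_sub]
  exact X_pow_dvd_iff.mp hdvd n n.lt_succ_self

theorem coeff_aeval_trunc (g h : R⟦X⟧) (N n : ℕ) :
    coeff n (Polynomial.aeval h (trunc N g)) =
      ∑ i ∈ Finset.range N, coeff i g * coeff n (h ^ i) := by
  rw [trunc_apply, map_sum, map_sum, Finset.range_eq_Ico]
  refine Finset.sum_congr rfl fun i _ => ?_
  simp [Polynomial.aeval_monomial]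

theorem coeff_compose_eq_sum_range {g h : ℚ⟦X⟧} (hh : constantCoeff h = 0) {n N : ℕ}
    (hn : n < N) :
    coeff n (compose g h) = ∑ i ∈ Finset.range N, coeff i g * coeff n (h ^ i) := by
  rw [compose, coeff_mk, coeff_aeval_trunc]
  refine Finset.sum_subset (Finset.range_subset_range.mpr hn) fun i _ hi => ?_
  rw [X_pow_dvd_iff.mp (pow_dvd_pow_of_dvd (X_dvd_iff.mpr hh) i) n
    (by simpa using hi), mul_zero]

theorem coeff_compose_sub_eq_of_coeff_eq {g f q : ℚ⟦X⟧} {n : ℕ}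
    (hf : constantCoeff f = 0) (hq : constantCoeff q = 0)
    (hfq : ∀ k < n, coeff k f = coeff k q) :
    coeff n (compose g f) - coeff 1 g * coeff n f
      = coeff n (compose g q) - coeff 1 g * coeff n q := by
  rw [sub_eq_sub_iff_sub_eq_sub, ← mul_sub, coeff_compose_eq_sum_range hf (by omega : n < n + 2),
    coeff_compose_eq_sum_range hq (by omega : n < n + 2), ← Finset.sum_sub_distrib,
    Finset.sum_eq_single 1 _ (by simp), pow_one, pow_one, mul_sub]
  intro i _ hi
  rcases Nat.lt_or_gt_of_ne hi with hi | hi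
  · rw [Nat.lt_one_iff.mp hi, pow_zero, pow_zero, sub_self]
  · rw [coeff_pow_eq_of_coeff_eq hi hf hq hfq, sub_self]

theorem coeff_eq_of_coeff_compose_eq {g f q : ℚ⟦X⟧} (hg : coeff 1 g ≠ 0)
    (hf : constantCoeff f = 0) (hq : constantCoeff q = 0) {N : ℕ}
    (hfq : ∀ k < N, coeff k (compose g f) = coeff k (compose g q)) :
    ∀ k < N, coeff k f = coeff k q := by
  intro k
  induction k using Nat.strong_induction_on with
  | _ k ih =>
    intro hk
    have h := coeff_compose_sub_eq_of_coeff_eq (g := g) hf hq fun j hj => ih j hj (hj.trans hk)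
    rw [hfq k hk, sub_right_inj] at h
    exact mul_left_cancel₀ hg h

end PowerSeries

theorem coeff_compose_X_sub_X_pow_three_add_X_pow_five (g : PowerSeries ℚ)
    (h1 : coeff 1 g = 1) (h3 : coeff 3 g = 1) (h5 : coeff 5 g = 2)
    (h7 : coeff 7 g = 4) (h9 : coeff 9 g = 5) (h11 : coeff 11 g = 6)
    (heven : ∀ n, coeff (2 * n) g = 0) :
    ∀ n < 12, coeff n (compose g (X - X ^ 3 + X ^ 5)) = coeff n (X + 19 * X ^ 11 : ℚ⟦X⟧) := by
  intro n hn
  rw [coeff_compose_eq_sum_range (by simp) hn]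
  simp only [Finset.sum_range_succ, Finset.sum_range_zero, h1, h3, h5, h7, h9, h11,
    heven 0, (heven 1 : coeff 2 g = 0), (heven 2 : coeff 4 g = 0), (heven 3 : coeff 6 g = 0),
    (heven 4 : coeff 8 g = 0), (heven 5 : coeff 10 g = 0)]
  ring_nf
  simp only [map_add, map_sub, coeff_X, coeff_X_pow, ← map_ofNat (C (R := ℚ)), coeff_mul_C,
    ite_mul, one_mul, zero_mul]
  interval_cases n <;> norm_num

theorem stmt1 (g : PowerSeries ℚ)
    (h1 : coeff 1 g = 1) (h3 : coeff 3 g = 1) (h5 : coeff 5 g = 2)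
    (h7 : coeff 7 g = 4) (h9 : coeff 9 g = 5) (h11 : coeff 11 g = 6)
    (heven : ∀ n, coeff (2 * n) g = 0) :
    ¬ ∃ s : PowerSeries ℚ,
        (∀ n, 0 ≤ coeff n s) ∧ constantCoeff s = 0 ∧
        PowerSeries.compose g (-(PowerSeries.rescale (-1) s)) = X := by
  rintro ⟨s, hs_nonneg, hs0, hcomp⟩
  have hf0 : constantCoeff (-(rescale (-1) s)) = 0 := by
    rw [map_neg, ← coeff_zero_eq_constantCoeff_apply, coeff_rescale,
      coeff_zero_eq_constantCoeff_apply, hs0, mul_zero, neg_zero]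
  have hQ0 : constantCoeff (X - X ^ 3 + X ^ 5 : ℚ⟦X⟧) = 0 := by simp
  have hQ := coeff_compose_X_sub_X_pow_three_add_X_pow_five g h1 h3 h5 h7 h9 h11 heven
  have hagree : ∀ k < 11, coeff k (-(rescale (-1) s)) = coeff k (X - X ^ 3 + X ^ 5) :=
    coeff_eq_of_coeff_compose_eq (by rw [h1]; exact one_ne_zero) hf0 hQ0 fun k hk => by
      rw [hcomp, hQ k (by omega)]
      simp [coeff_X_pow, coeff_X, ← map_ofNat (C (R := ℚ)), hk.ne]
  have h := coeff_compose_sub_eq_of_coeff_eq (g := g) hf0 hQ0 hagree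
  rw [hcomp, hQ 11 (by norm_num), h1] at h
  have hs11 : coeff 11 s = -19 := by
    simp [coeff_X_pow, coeff_X, ← map_ofNat (C (R := ℚ)), coeff_rescale] at h
    linarith
  linarith [hs_nonneg 11]
end

section
/- Let p(X) = X − X³ + X⁵ ∈ ℚ[X] and g(X) = X + X³ + 2X⁵ + 4X⁷ + 5X⁹ + 6X¹¹ ∈ ℚ[X]. Then the coefficient of X¹¹ in the polynomial g(p(X)) (composition g ∘ p) equals 19; in particular g(p(X)) ≠ X as polynomials. -/
open Polynomial

theorem stmt2 :
    let p : ℚ[X] := X - X ^ 3 + X ^ 5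
    let g : ℚ[X] := X + X ^ 3 + 2 * X ^ 5 + 4 * X ^ 7 + 5 * X ^ 9 + 6 * X ^ 11
    (g.comp p).coeff 11 = 19 ∧ g.comp p ≠ X := by
  intro p g
  have h : (g.comp p).coeff 11 = 19 := by
    simp only [g, p, add_comp, mul_comp, pow_comp, X_comp, ofNat_comp, sub_comp]
    ring_nf
    simp [coeff_add, coeff_sub, coeff_X_pow, coeff_ofNat_mul, coeff_X]
  refine ⟨h, fun hx => ?_⟩
  rw [hx] at h
  simp [coeff_X] at h
end

section
/- Let A and B be vector spaces over a field K of characteristic 0, μ_A : A×A×A → A a trilinear map satisfying partial associativity μ_A(μ_A(a₁,a₂,a₃),a₄,a₅) + μ_A(a₁,μ_A(a₂,a₃,a₄),a₅) + μ_A(a₁,a₂,μ_A(a₃,a₄,a₅)) = 0, and μ_B : B×B×B → B a trilinear map satisfying total associativity μ_B(μ_B(b₁,b₂,b₃),b₄,b₅) = μ_B(b₁,μ_B(b₂,b₃,b₄),b₅) = μ_B(b₁,b₂,μ_B(b₃,b₄,b₅)). Then the trilinear map μ on A ⊗ B determined by μ(a₁⊗b₁, a₂⊗b₂, a₃⊗b₃)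 = μ_A(a₁,a₂,a₃) ⊗ μ_B(b₁,b₂,b₃) is partially associative. -/
open TensorProduct

private lemma add6 {M : Type*} [AddCommGroup M] {a b c d e f : M}
    (h1 : a + c + e = 0) (h2 : b + d + f = 0) : (a + b) + (c + d) + (e + f) = 0 := by
  have : (a + b) + (c + d) + (e + f) = (a + c + e) + (b + d + f) := by abel
  rw [this, h1, h2, add_zero]

theorem stmt6 (K A B : Type*) [Field K] [CharZero K]
    [AddCommGroup A] [Module K A] [AddCommGroup B] [Module K B]
    (μA : A →ₗ[K] A →ₗ[K] A →ₗ[K] A)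
    (hA : ∀ a1 a2 a3 a4 a5 : A,
      μA (μA a1 a2 a3) a4 a5 + μA a1 (μA a2 a3 a4) a5 + μA a1 a2 (μA a3 a4 a5) = 0)
    (μB : B →ₗ[K] B →ₗ[K] B →ₗ[K] B)
    (hB : ∀ b1 b2 b3 b4 b5 : B,
      μB (μB b1 b2 b3) b4 b5 = μB b1 (μB b2 b3 b4) b5 ∧
      μB b1 (μB b2 b3 b4) b5 = μB b1 b2 (μB b3 b4 b5))
    (μ : A ⊗[K] B →ₗ[K] A ⊗[K] B →ₗ[K] A ⊗[K] B →ₗ[K] A ⊗[K] B)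
    (hμ : ∀ (a1 a2 a3 : A) (b1 b2 b3 : B),
      μ (a1 ⊗ₜ[K] b1) (a2 ⊗ₜ[K] b2) (a3 ⊗ₜ[K] b3) = (μA a1 a2 a3) ⊗ₜ[K] (μB b1 b2 b3)) :
    ∀ x1 x2 x3 x4 x5 : A ⊗[K] B,
      μ (μ x1 x2 x3) x4 x5 + μ x1 (μ x2 x3 x4) x5 + μ x1 x2 (μ x3 x4 x5) = 0 := by
  intro x1 x2 x3 x4 x5
  induction x1 using TensorProduct.induction_on with
  | zero => simp
  | add y z hy hz => simp only [map_add, LinearMap.add_apply]; exact add6 hy hz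
  | tmul a1 b1 =>
  induction x2 using TensorProduct.induction_on with
  | zero => simp
  | add y z hy hz => simp only [map_add, LinearMap.add_apply]; exact add6 hy hz
  | tmul a2 b2 =>
  induction x3 using TensorProduct.induction_on with
  | zero => simp
  | add y z hy hz => simp only [map_add, LinearMap.add_apply]; exact add6 hy hz
  | tmul a3 b3 =>
  induction x4 using TensorProduct.induction_on with
  | zero => simp
  | add y z hy hz => simp only [map_add, LinearMap.add_apply]; exact add6 hy hz
  | tmul a4 b4 =>
  induction x5 using TensorProduct.induction_on with
  | zero => simp
  | add y z hy hz => simp only [map_add, LinearMap.add_apply]; exact add6 hy hz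
  | tmul a5 b5 =>
    simp only [hμ]
    rw [(hB b1 b2 b3 b4 b5).1, (hB b1 b2 b3 b4 b5).2, ← TensorProduct.add_tmul,
      ← TensorProduct.add_tmul, hA, TensorProduct.zero_tmul]
end
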